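/- Let k be a field of characteristic ≠ 2 and H = (kC₂)* the dual of the group algebra of the cyclic group of order 2. Then the universal partial Hopf algebra H_par is isomorphic as a k-algebra to k[x]/⟨x(2x-1)(x-1)⟩; in particular it is 3-dimensional. -/

import Mathlib

open TensorProduct BigOperators HopfAlgebra

variable (k : Type) [CommRing k] (H : Type) [Ring H] [HopfAlgebra k H]

/-- `sw f g : H → T(H)` is the Sweedler convolution `x ↦ ∑ f(x₍₁₎) * g(x₍₂₎)`. -/
noncomputable def sw (f g : H →ₗ[k] TensorAlgebra k H) : H →ₗ[k] TensorAlgebra k H :=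
  (LinearMap.mul' k (TensorAlgebra k H)) ∘ₗ (TensorProduct.map f g) ∘ₗ
    (Coalgebra.comul (R := k))

/-- The defining relations of the universal partial "Hopf" algebra `H_par`,
imposed on the tensor algebra `T(H)`. -/
inductive HparRel : TensorAlgebra k H → TensorAlgebra k H → Prop
  | one : HparRel (TensorAlgebra.ι k (1 : H)) 1
  | pr2 (h x : H) : HparRel
      (TensorAlgebra.ι k h *
        sw k H (TensorAlgebra.ι k) ((TensorAlgebra.ι k) ∘ₗ antipode (R := k)) x)
      (sw k H ((TensorAlgebra.ι k) ∘ₗ LinearMap.mulLeft k h)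
        ((TensorAlgebra.ι k) ∘ₗ antipode (R := k)) x)
  | pr3 (h x : H) : HparRel
      (sw k H (TensorAlgebra.ι k) ((TensorAlgebra.ι k) ∘ₗ antipode (R := k)) h *
        TensorAlgebra.ι k x)
      (sw k H (TensorAlgebra.ι k)
        ((TensorAlgebra.ι k) ∘ₗ (LinearMap.mulRight k x) ∘ₗ antipode (R := k)) h)
  | pr4 (h x : H) : HparRel
      (TensorAlgebra.ι k h *
        sw k H ((TensorAlgebra.ι k) ∘ₗ antipode (R := k)) (TensorAlgebra.ι k) x)
      (sw k H ((TensorAlgebra.ι k) ∘ₗ (LinearMap.mulLeft k h) ∘ₗ antipode (R := k))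
        (TensorAlgebra.ι k) x)
  | pr5 (h x : H) : HparRel
      (sw k H ((TensorAlgebra.ι k) ∘ₗ antipode (R := k)) (TensorAlgebra.ι k) h *
        TensorAlgebra.ι k x)
      (sw k H ((TensorAlgebra.ι k) ∘ₗ antipode (R := k))
        ((TensorAlgebra.ι k) ∘ₗ LinearMap.mulRight k x) h)

/-- The universal partial "Hopf" algebra `H_par` of a Hopf algebra `H`. -/
abbrev Hpar : Type := RingQuot (HparRel k H)

/-- The canonical (universal) partial representation `h ↦ [h]` of `H` on `H_par`. -/
noncomputable def bracket : H →ₗ[k] Hpar k H :=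
  (RingQuot.mkAlgHom k (HparRel k H)).toLinearMap ∘ₗ TensorAlgebra.ι k

/-!
`H_par` is generated by `E = [p_e]` and `G = [p_g]` with `E + G = 1`. The defining relation
`[p_g] [p_e₍₁₎] [S p_e₍₂₎] = [p_g p_e₍₁₎] [S p_e₍₂₎]` reads `G (E² + G²) = G²`, i.e.
`G (2G - 1) (G - 1) = 0`, so `x ↦ G` defines a surjection `k[x]/⟨x(2x-1)(x-1)⟩ → H_par`.
Conversely `p_e ↦ 1 - x`, `p_g ↦ x` respects all defining relations: the target is commutative
and `S = id`, so on basis elements they reduce to four identities, each a multiple of the cubic.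
The two maps are mutually inverse, and the cubic has degree 3 because `2 ≠ 0`.
-/

open Polynomial

theorem cubic_eq_zero_of_mul_add_mul_eq {R : Type*} [Ring R] {e g : R} (hsum : e + g = 1)
    (h : g * (e * e + g * g) = g * g) : g * (2 * g - 1) * (g - 1) = 0 := by
  rw [← sub_eq_zero, eq_sub_of_add_eq hsum] at h
  rw [← h]
  noncomm_ring

/-- The relations of `H_par` for `(kC₂)*`, evaluated on basis elements in a commutative algebra
where `p_e ↦ e` and `p_g ↦ g`. -/
theorem partialRep_identities_of_cubic_eq_zero {A : Type*} [CommRing A] {e g : A}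
    (hsum : e + g = 1) (hcubic : g * (2 * g - 1) * (g - 1) = 0) :
    e * (e * e + g * g) = e * e ∧ g * (e * e + g * g) = g * g ∧
      e * (e * g + g * e) = e * g ∧ g * (e * g + g * e) = e * g := by
  obtain rfl : e = 1 - g := eq_sub_of_add_eq hsum
  exact ⟨by linear_combination -hcubic, by linear_combination hcubic,
    by linear_combination hcubic, by linear_combination -hcubic⟩

noncomputable def partialCubic (k : Type) [CommRing k] : k[X] := X * (2 * X - 1) * (X - 1)

theorem aeval_partialCubic {k A : Type} [CommRing k] [Ring A] [Algebra k A] (x : A) :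
    aeval x (partialCubic k) = x * (2 * x - 1) * (x - 1) := by
  simp only [partialCubic, map_mul, map_sub, map_one, aeval_X, map_ofNat]

theorem root_partialCubic {k : Type} [CommRing k] :
    AdjoinRoot.root (partialCubic k) * (2 * AdjoinRoot.root (partialCubic k) - 1) *
      (AdjoinRoot.root (partialCubic k) - 1) = 0 := by
  rw [← aeval_partialCubic (k := k), AdjoinRoot.aeval_eq (f := partialCubic k),
    AdjoinRoot.mk_self]

theorem natDegree_partialCubic {k : Type} [CommRing k] [Nontrivial k] (h2 : (2 : k) ≠ 0) :
    (partialCubic k).natDegree = 3 := by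
  unfold partialCubic
  compute_degree!

theorem Module.Basis.exists_eq_smul_add_smul {R M : Type*} [Semiring R] [AddCommMonoid M]
    [Module R M] (b : Module.Basis (Fin 2) R M) (x : M) : ∃ c₀ c₁ : R, x = c₀ • b 0 + c₁ • b 1 :=
  ⟨b.repr x 0, b.repr x 1, by rw [← Fin.sum_univ_two (fun i ↦ b.repr x i • b i), b.sum_repr]⟩

theorem Hpar.algHom_ext {k H B ι : Type} [CommRing k] [Ring H] [HopfAlgebra k H] [Semiring B]
    [Algebra k B] (b : Module.Basis ι k H) {φ ψ : Hpar k H →ₐ[k] B}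
    (h : ∀ i, φ (bracket k H (b i)) = ψ (bracket k H (b i))) : φ = ψ :=
  RingQuot.ringQuot_ext' _ _ _ <| TensorAlgebra.hom_ext <| b.ext h

structure IsDualC2Basis (k : Type) [CommRing k] {H : Type} [Ring H] [HopfAlgebra k H]
    (pe pg : H) : Prop where
  add_eq_one : pe + pg = 1
  mul_eq_zero : pe * pg = 0
  comul_pe : Coalgebra.comul (R := k) pe = pe ⊗ₜ[k] pe + pg ⊗ₜ[k] pg
  comul_pg : Coalgebra.comul (R := k) pg = pe ⊗ₜ[k] pg + pg ⊗ₜ[k] pe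
  antipode_eq_id : antipode (R := k) (A := H) = LinearMap.id

namespace IsDualC2Basis

variable {k : Type} [CommRing k] {H : Type} [Ring H] [HopfAlgebra k H] {pe pg : H}
  {A : Type} [CommRing A] [Algebra k A]

theorem mul_self_pe (hH : IsDualC2Basis k pe pg) : pe * pe = pe := by
  simpa [mul_add, hH.mul_eq_zero] using congrArg (pe * ·) hH.add_eq_one

theorem mul_pg_pe (hH : IsDualC2Basis k pe pg) : pg * pe = 0 := by
  simpa [add_mul, hH.mul_self_pe] using congrArg (· * pe) hH.add_eq_one

theorem mul_self_pg (hH : IsDualC2Basis k pe pg) : pg * pg = pg := by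
  simpa [mul_add, hH.mul_pg_pe] using congrArg (pg * ·) hH.add_eq_one

theorem sw_pe (hH : IsDualC2Basis k pe pg) (u v : H →ₗ[k] TensorAlgebra k H) :
    sw k H u v pe = u pe * v pe + u pg * v pg := by
  simp [sw, hH.comul_pe]

theorem sw_pg (hH : IsDualC2Basis k pe pg) (u v : H →ₗ[k] TensorAlgebra k H) :
    sw k H u v pg = u pe * v pg + u pg * v pe := by
  simp [sw, hH.comul_pg]

section Lift

variable {f : H →ₗ[k] A}

local notation "ι" => TensorAlgebra.ι k (M := H)

theorem lift_ι_mul_sw (hH : IsDualC2Basis k pe pg) (b : Module.Basis (Fin 2) k H)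
    (hb0 : b 0 = pe) (hb1 : b 1 = pg) (hf : f pe + f pg = 1)
    (hcubic : f pg * (2 * f pg - 1) * (f pg - 1) = 0) (h x : H) :
    TensorAlgebra.lift k f (ι h * sw k H ι ι x) =
      TensorAlgebra.lift k f (sw k H (ι ∘ₗ LinearMap.mulLeft k h) ι x) := by
  subst hb0 hb1
  obtain ⟨c₀, c₁, rfl⟩ := b.exists_eq_smul_add_smul h
  obtain ⟨d₀, d₁, rfl⟩ := b.exists_eq_smul_add_smul x
  obtain ⟨h₁, h₂, h₃, h₄⟩ := partialRep_identities_of_cubic_eq_zero hf hcubic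
  simp only [map_add, map_smul, hH.sw_pe, hH.sw_pg, smul_add, mul_add, add_mul,
    Algebra.mul_smul_comm, Algebra.smul_mul_assoc, map_mul, TensorAlgebra.lift_ι_apply,
    LinearMap.coe_comp, Function.comp_apply, LinearMap.mulLeft_apply, hH.mul_self_pe,
    hH.mul_pg_pe, hH.mul_eq_zero, hH.mul_self_pg, smul_zero, add_zero, zero_add]
  simp only [Algebra.smul_def]
  linear_combination (algebraMap k A d₀ * algebraMap k A c₀) * h₁
    + (algebraMap k A d₀ * algebraMap k A c₁) * h₂
    + (algebraMap k A d₁ * algebraMap k A c₀) * h₃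
    + (algebraMap k A d₁ * algebraMap k A c₁) * h₄

theorem lift_sw_mul_ι (hH : IsDualC2Basis k pe pg) (b : Module.Basis (Fin 2) k H)
    (hb0 : b 0 = pe) (hb1 : b 1 = pg) (hf : f pe + f pg = 1)
    (hcubic : f pg * (2 * f pg - 1) * (f pg - 1) = 0) (h x : H) :
    TensorAlgebra.lift k f (sw k H ι ι h * ι x) =
      TensorAlgebra.lift k f (sw k H ι (ι ∘ₗ LinearMap.mulRight k x) h) := by
  subst hb0 hb1
  obtain ⟨c₀, c₁, rfl⟩ := b.exists_eq_smul_add_smul h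
  obtain ⟨d₀, d₁, rfl⟩ := b.exists_eq_smul_add_smul x
  obtain ⟨h₁, h₂, h₃, h₄⟩ := partialRep_identities_of_cubic_eq_zero hf hcubic
  simp only [map_add, map_smul, hH.sw_pe, hH.sw_pg, smul_add, mul_add, add_mul,
    Algebra.mul_smul_comm, Algebra.smul_mul_assoc, map_mul, TensorAlgebra.lift_ι_apply,
    LinearMap.coe_comp, Function.comp_apply, LinearMap.mulRight_apply, hH.mul_self_pe,
    hH.mul_pg_pe, hH.mul_eq_zero, hH.mul_self_pg, smul_zero, add_zero, zero_add]
  simp only [Algebra.smul_def]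
  linear_combination (algebraMap k A d₀ * algebraMap k A c₀) * h₁
    + (algebraMap k A d₀ * algebraMap k A c₁) * h₃
    + (algebraMap k A d₁ * algebraMap k A c₀) * h₂
    + (algebraMap k A d₁ * algebraMap k A c₁) * h₄

theorem lift_respects_hparRel (hH : IsDualC2Basis k pe pg) (b : Module.Basis (Fin 2) k H)
    (hb0 : b 0 = pe) (hb1 : b 1 = pg) (hf : f pe + f pg = 1)
    (hcubic : f pg * (2 * f pg - 1) * (f pg - 1) = 0) ⦃x y : TensorAlgebra k H⦄
    (hxy : HparRel k H x y) : TensorAlgebra.lift k f x = TensorAlgebra.lift k f y := by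
  induction hxy with
  | one => simpa [← hH.add_eq_one] using hf
  | pr2 h x => simpa [hH.antipode_eq_id] using lift_ι_mul_sw hH b hb0 hb1 hf hcubic h x
  | pr3 h x => simpa [hH.antipode_eq_id] using lift_sw_mul_ι hH b hb0 hb1 hf hcubic h x
  | pr4 h x => simpa [hH.antipode_eq_id] using lift_ι_mul_sw hH b hb0 hb1 hf hcubic h x
  | pr5 h x => simpa [hH.antipode_eq_id] using lift_sw_mul_ι hH b hb0 hb1 hf hcubic h x

end Lift

noncomputable def hparLift (hH : IsDualC2Basis k pe pg) (b : Module.Basis (Fin 2) k H)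
    (hb0 : b 0 = pe) (hb1 : b 1 = pg) (r : A) (hr : r * (2 * r - 1) * (r - 1) = 0) :
    Hpar k H →ₐ[k] A :=
  RingQuot.liftAlgHom k ⟨TensorAlgebra.lift k (b.constr k ![1 - r, r]),
    hH.lift_respects_hparRel b hb0 hb1 (by simp [← hb0, ← hb1]) (by simpa [← hb1] using hr)⟩

theorem hparLift_bracket (hH : IsDualC2Basis k pe pg) (b : Module.Basis (Fin 2) k H)
    (hb0 : b 0 = pe) (hb1 : b 1 = pg) (r : A) (hr : r * (2 * r - 1) * (r - 1) = 0) (x : H) :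
    hH.hparLift b hb0 hb1 r hr (bracket k H x) = b.constr k ![1 - r, r] x := by
  simp [hparLift, bracket]

theorem bracket_pe_add_bracket_pg (hH : IsDualC2Basis k pe pg) :
    bracket k H pe + bracket k H pg = 1 := by
  rw [← map_add, hH.add_eq_one]
  simpa [bracket] using RingQuot.mkAlgHom_rel k (HparRel.one (k := k) (H := H))

theorem bracket_pg_cubic (hH : IsDualC2Basis k pe pg) :
    bracket k H pg * (2 * bracket k H pg - 1) * (bracket k H pg - 1) = 0 := by
  refine cubic_eq_zero_of_mul_add_mul_eq hH.bracket_pe_add_bracket_pg ?_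
  simpa [bracket, hH.antipode_eq_id, hH.sw_pe, hH.mul_pg_pe, hH.mul_self_pg] using
    RingQuot.mkAlgHom_rel k (HparRel.pr2 (k := k) pg pe)

noncomputable def toHpar (hH : IsDualC2Basis k pe pg) :
    AdjoinRoot (partialCubic k) →ₐ[k] Hpar k H :=
  Ideal.Quotient.liftₐ _ (aeval (bracket k H pg)) fun p hp => by
    obtain ⟨c, rfl⟩ := Ideal.mem_span_singleton'.mp hp
    rw [map_mul, aeval_partialCubic, hH.bracket_pg_cubic, mul_zero]

theorem toHpar_root (hH : IsDualC2Basis k pe pg) :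
    hH.toHpar (AdjoinRoot.root (partialCubic k)) = bracket k H pg := by
  rw [← AdjoinRoot.mk_X]
  exact aeval_X _

noncomputable def hparEquiv (hH : IsDualC2Basis k pe pg) (b : Module.Basis (Fin 2) k H)
    (hb0 : b 0 = pe) (hb1 : b 1 = pg) : Hpar k H ≃ₐ[k] AdjoinRoot (partialCubic k) :=
  AlgEquiv.ofAlgHom (hH.hparLift b hb0 hb1 _ root_partialCubic) hH.toHpar
    (AdjoinRoot.algHom_ext <| by simp [toHpar_root, hparLift_bracket, ← hb1])
    (Hpar.algHom_ext b fun i => by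
      fin_cases i
      · simp only [Fin.zero_eta, AlgHom.comp_apply, hparLift_bracket, b.constr_basis,
          Matrix.cons_val_zero, map_sub, map_one, toHpar_root, AlgHom.id_apply]
        rw [hb0, ← eq_sub_of_add_eq hH.bracket_pe_add_bracket_pg]
      · simp [hparLift_bracket, toHpar_root, ← hb1])

end IsDualC2Basis

theorem Hpar_of_dual_C2_general (k : Type) [Field k] (hchar : (2 : k) ≠ 0)
    (H : Type) [Ring H] [HopfAlgebra k H] (pe pg : H)
    (b : Module.Basis (Fin 2) k H) (hb0 : b 0 = pe) (hb1 : b 1 = pg)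
    (hsum : pe + pg = 1) (hprod : pe * pg = 0)
    (hcomul_e : Coalgebra.comul (R := k) pe = pe ⊗ₜ[k] pe + pg ⊗ₜ[k] pg)
    (hcomul_g : Coalgebra.comul (R := k) pg = pe ⊗ₜ[k] pg + pg ⊗ₜ[k] pe)
    (hantipode : antipode (R := k) (A := H) = LinearMap.id) :
    Nonempty (Hpar k H ≃ₐ[k]
      (Polynomial k ⧸ Ideal.span
        {Polynomial.X * (2 * Polynomial.X - 1 : Polynomial k) * (Polynomial.X - 1 : Polynomial k)})) ∧
    Module.finrank k (Hpar k H) = 3 := by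
  have hH : IsDualC2Basis k pe pg := ⟨hsum, hprod, hcomul_e, hcomul_g, hantipode⟩
  let e := hH.hparEquiv b hb0 hb1
  refine ⟨⟨e⟩, ?_⟩
  rw [e.toLinearEquiv.finrank_eq, ← natDegree_partialCubic hchar]
  exact finrank_quotient_span_eq_natDegree

/-- Let `k` be a field with `char k ≠ 2` and let `H = (kC₂)*` be the dual of
the group algebra of the cyclic group of order two: `H` has a basis `{p_e, p_g}` with
`p_e + p_g = 1`, `p_e p_g = 0`, `Δ(p_e) = p_e⊗p_e + p_g⊗p_g`, `Δ(p_g) = p_e⊗p_g + p_g⊗p_e`,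
`ε(p_e) = 1`, `ε(p_g) = 0` and `S = id`.  Then `H_par ≅ k[x]/⟨x(2x-1)(x-1)⟩` as
`k`-algebras; in particular `H_par` is 3-dimensional. -/
theorem Hpar_of_dual_C2 (k : Type) [Field k] (hchar : (2 : k) ≠ 0)
    (H : Type) [Ring H] [HopfAlgebra k H] (pe pg : H)
    (b : Module.Basis (Fin 2) k H) (hb0 : b 0 = pe) (hb1 : b 1 = pg)
    (hsum : pe + pg = 1) (hprod : pe * pg = 0)
    (hcomul_e : Coalgebra.comul (R := k) pe = pe ⊗ₜ[k] pe + pg ⊗ₜ[k] pg)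
    (hcomul_g : Coalgebra.comul (R := k) pg = pe ⊗ₜ[k] pg + pg ⊗ₜ[k] pe)
    (hcounit_e : Coalgebra.counit (R := k) (A := H) pe = 1)
    (hcounit_g : Coalgebra.counit (R := k) (A := H) pg = 0)
    (hantipode : antipode (R := k) (A := H) = LinearMap.id) :
    Nonempty (Hpar k H ≃ₐ[k]
      (Polynomial k ⧸ Ideal.span
        {Polynomial.X * (2 * Polynomial.X - 1 : Polynomial k) * (Polynomial.X - 1 : Polynomial k)})) ∧
    Module.finrank k (Hpar k H) = 3 :=
  Hpar_of_dual_C2_general k hchar H pe pg b hb0 hb1 hsum hprod hcomul_e hcomul_g hantipode
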